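/- arXiv:1002.3539 — 4 statements merged into one kernel-verified Lean document; each statement's English description precedes it below -/
import Mathlib

section
/- The function f_1(u,t) = 1 for u ≤ -βt/(1-β), f_1(u,t) = (1/β)(1 - sqrt(t(1-β)/(t-u))) for -βt/(1-β) ≤ u ≤ βt, and f_1(u,t) = 0 for u ≥ βt, satisfies the conservation-law PDE ∂f/∂t + ∂/∂u [ β f(1-f)/(1-βf) ] = 0 at all points (u,t) with t > 0 and -βt/(1-β) < u < βt. -/
/-!
Inside the fan, `f1profile β u t = g (u / t)` for the centred rarefaction wave
`g ξ = (1 - √((1 - β) / (1 - ξ))) / β`. For any self-similar `f = g (u / t)` one has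
`∂ₜ f = -(u / t²) g'` and `∂ᵤ j(f) = j'(g) g' / t`, which cancel as soon as `j'(g ξ) = ξ`.
Writing `s = 1 - β f`, the flux `j f = β f (1 - f) / (1 - β f)` has `j' f = 1 - (1 - β) / s²`,
and `s² = (1 - β) / (1 - ξ)` on the wave, so `j'(g ξ) = ξ`.
-/

noncomputable def f1profile (β : ℝ) : ℝ → ℝ → ℝ := fun u t =>
  if u ≤ -(β * t) / (1 - β) then 1
  else if β * t ≤ u then 0
  else (1 / β) * (1 - Real.sqrt (t * (1 - β) / (t - u)))

open Filter Topology

theorem deriv_selfSimilar_add_deriv_flux_eq_zero {F : ℝ → ℝ → ℝ} {g j : ℝ → ℝ} {u t : ℝ}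
    (ht : t ≠ 0) (hF : ∀ᶠ p in 𝓝 (u, t), F p.1 p.2 = g (p.1 / p.2))
    (hg : DifferentiableAt ℝ g (u / t)) (hj : HasDerivAt j (u / t) (g (u / t))) :
    deriv (fun s => F u s) t + deriv (fun v => j (F v t)) u = 0 := by
  have hF_time : (fun s => F u s) =ᶠ[𝓝 t] fun s => g (u / s) :=
    ((continuous_const.prodMk continuous_id).tendsto t).eventually hF
  have hF_space : (fun v => j (F v t)) =ᶠ[𝓝 u] fun v => j (g (v / t)) :=
    ((continuous_id.prodMk continuous_const).tendsto u).eventually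
      (hF.mono fun p hp => congrArg j hp)
  have h_time : HasDerivAt (fun s => g (u / s)) (deriv g (u / t) * (u * -(t ^ 2)⁻¹)) t :=
    hg.hasDerivAt.comp t ((hasDerivAt_inv ht).const_mul u)
  have h_space : HasDerivAt (fun v => j (g (v / t))) (u / t * (deriv g (u / t) * (1 / t))) u :=
    hj.comp u (hg.hasDerivAt.comp u ((hasDerivAt_id u).div_const t))
  rw [hF_time.deriv_eq, hF_space.deriv_eq, h_time.deriv, h_space.deriv]
  field_simp
  ring

noncomputable def flux (β f : ℝ) : ℝ := β * f * (1 - f) / (1 - β * f)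

noncomputable def rarefaction (β ξ : ℝ) : ℝ := (1 / β) * (1 - Real.sqrt ((1 - β) / (1 - ξ)))

theorem hasDerivAt_flux {β f : ℝ} (hf : 1 - β * f ≠ 0) :
    HasDerivAt (flux β) (1 - (1 - β) / (1 - β * f) ^ 2) f := by
  have hlin : HasDerivAt (fun x => β * x) β f := by simpa using (hasDerivAt_id' f).const_mul β
  have h := (hlin.fun_mul ((hasDerivAt_id' f).const_sub 1)).fun_div (hlin.const_sub 1) hf
  refine h.congr_deriv ?_
  field_simp
  ring

theorem one_sub_mul_rarefaction {β ξ : ℝ} (hβ : β ≠ 0) :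
    1 - β * rarefaction β ξ = Real.sqrt ((1 - β) / (1 - ξ)) := by
  unfold rarefaction
  field_simp
  ring

theorem hasDerivAt_flux_rarefaction {β ξ : ℝ} (hβ0 : β ≠ 0) (hβ1 : β < 1) (hξ : ξ < 1) :
    HasDerivAt (flux β) ξ (rarefaction β ξ) := by
  have hpos : 0 < (1 - β) / (1 - ξ) := div_pos (by linarith) (by linarith)
  have hsqrt := one_sub_mul_rarefaction (ξ := ξ) hβ0
  convert hasDerivAt_flux (hsqrt ▸ (Real.sqrt_pos.mpr hpos).ne') using 1
  rw [hsqrt, Real.sq_sqrt hpos.le]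
  field_simp [(sub_pos.mpr hβ1).ne', (sub_pos.mpr hξ).ne']
  ring

theorem differentiableAt_rarefaction {β ξ : ℝ} (hβ1 : β < 1) (hξ : ξ < 1) :
    DifferentiableAt ℝ (rarefaction β) ξ := by
  have hpos : 0 < (1 - β) / (1 - ξ) := div_pos (by linarith) (by linarith)
  unfold rarefaction
  fun_prop (disch := first | exact hpos.ne' | exact (sub_pos.mpr hξ).ne')

theorem f1profile_eq_rarefaction {β u t : ℝ} (hβ1 : β < 1) (ht : 0 < t)
    (h1 : -(β * t) / (1 - β) < u) (h2 : u < β * t) :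
    f1profile β u t = rarefaction β (u / t) := by
  have hu : u < t := h2.trans (by nlinarith)
  simp only [f1profile, if_neg (not_le.mpr h1), if_neg (not_le.mpr h2), rarefaction]
  congr 3
  field_simp [ht.ne', (sub_pos.mpr hu).ne']

theorem eventually_f1profile_eq_rarefaction {β u t : ℝ} (hβ1 : β < 1) (ht : 0 < t)
    (h1 : -(β * t) / (1 - β) < u) (h2 : u < β * t) :
    ∀ᶠ p in 𝓝 (u, t), f1profile β p.1 p.2 = rarefaction β (p.1 / p.2) := by
  have hfan : IsOpen {p : ℝ × ℝ | 0 < p.2 ∧ -(β * p.2) / (1 - β) < p.1 ∧ p.1 < β * p.2} :=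
    (isOpen_lt continuous_const continuous_snd).inter
      ((isOpen_lt (by fun_prop) continuous_fst).inter (isOpen_lt continuous_fst (by fun_prop)))
  filter_upwards [hfan.mem_nhds ⟨ht, h1, h2⟩] with p ⟨hp0, hp1, hp2⟩
  exact f1profile_eq_rarefaction hβ1 hp0 hp1 hp2

theorem stmt0 (β : ℝ) (hβ : β ∈ Set.Ioo (0:ℝ) 1) (u t : ℝ) (ht : 0 < t)
    (h1 : -(β * t) / (1 - β) < u) (h2 : u < β * t) :
    deriv (fun s => f1profile β u s) t
      + deriv (fun v => β * f1profile β v t * (1 - f1profile β v t)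
          / (1 - β * f1profile β v t)) u = 0 := by
  obtain ⟨hβ0, hβ1⟩ := hβ
  have hξ : u / t < 1 := ((div_lt_iff₀ ht).mpr h2).trans hβ1
  exact deriv_selfSimilar_add_deriv_flux_eq_zero (j := flux β) ht.ne'
    (eventually_f1profile_eq_rarefaction hβ1 ht h1 h2)
    (differentiableAt_rarefaction hβ1 hξ) (hasDerivAt_flux_rarefaction hβ0.ne' hβ1 hξ)
end

section
/- Let β ∈ (0,1), g_1(u) = 1 - f_1(u) where f_1(u) = (1/β)(1 - sqrt((1-β)/(1-u))) on [-β/(1-β), β]. Define s_1(x,y) = g_1'(x)g_1'(y) for x > y, and s_1(x,y) = ((1-β)/(2β³))(1-x)^{-3/2}(1-y)^{-3/2}(sqrt((1-β)/(1-y)) - sqrt((1-β)/(1-x))) for x ≤ y, and r_1(x) = sqrt(1-β)(1-g_1(x))g_1(x)/(2β(1-x)^{3/2}), all on [-β/(1-β), β]². Then ∬_{x>y} s_1 dx dy = 1/2, ∫ r_1(x) dx = 1/6, and ∬_{x<y} s_1 dx dy = 1/3; in particular the total mass is 1. -/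
/-! Write `g = g1speed β`. On `[-β/(1-β), β]` it increases from `0` to `1`, with derivative
`g' x = √(1-β)/(2β) · (1-x)^(-3/2)`, and the three densities are expressed through it:
`s₁ x y = g' x · g' y` for `y < x`, `s₁ x y = 2 (g y - g x) · g' x · g' y` for `x ≤ y`, and
`r₁ = g (1 - g) g'`. The substitution `t = g x` therefore turns the three masses into
`∫∫_{v<u} 1 = 1/2`, `∫ t (1-t) dt = 1/6` and `∫∫_{u<v} 2 (v-u) = 1/3` over `[0,1]`. -/

open Real Set

noncomputable def g1speed (β : ℝ) : ℝ → ℝ := fun u =>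
  1 - (1/β) * (1 - Real.sqrt ((1-β)/(1-u)))

noncomputable def s1dens (β : ℝ) : ℝ → ℝ → ℝ := fun x y =>
  if y < x then ((1-β)/(4*β^2)) * (1-x) ^ (-(3/2) : ℝ) * (1-y) ^ (-(3/2) : ℝ)
  else ((1-β)/(2*β^3)) * (1-x) ^ (-(3/2) : ℝ) * (1-y) ^ (-(3/2) : ℝ)
        * (Real.sqrt ((1-β)/(1-y)) - Real.sqrt ((1-β)/(1-x)))

noncomputable def r1dens (β : ℝ) : ℝ → ℝ := fun x =>
  Real.sqrt (1-β) * (1 - g1speed β x) * g1speed β x / (2*β*(1-x) ^ ((3/2) : ℝ))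

open MeasureTheory intervalIntegral

variable {E : Type*} [NormedAddCommGroup E] [NormedSpace ℝ E]

lemma setIntegral_Icc_eq_intervalIntegral {f : ℝ → E} {a b : ℝ} (hab : a ≤ b) :
    ∫ x in Icc a b, f x = ∫ x in a..b, f x := by
  rw [integral_Icc_eq_integral_Ioc, integral_of_le hab]

lemma setIntegral_Icc_ite_lt {F : ℝ → E} {a b x : ℝ} (hx : x ∈ Icc a b) :
    ∫ y in Icc a b, (if y < x then F y else 0) = ∫ y in a..x, F y := by
  have hset : Icc a b ∩ Iio x = Ico a x := by
    ext y; simp only [mem_inter_iff, mem_Icc, mem_Iio, mem_Ico]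
    constructor
    · rintro ⟨⟨hay, -⟩, hyx⟩; exact ⟨hay, hyx⟩
    · rintro ⟨hay, hyx⟩; exact ⟨⟨hay, hyx.le.trans hx.2⟩, hyx⟩
  simp_rw [← mem_Iio, ← indicator_apply]
  rw [setIntegral_indicator measurableSet_Iio, hset, integral_Ico_eq_integral_Ioo,
    ← integral_Ioc_eq_integral_Ioo, integral_of_le hx.1]

lemma setIntegral_Icc_ite_gt {F : ℝ → E} {a b x : ℝ} (hx : x ∈ Icc a b) :
    ∫ y in Icc a b, (if x < y then F y else 0) = ∫ y in x..b, F y := by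
  have hset : Icc a b ∩ Ioi x = Ioc x b := by
    ext y; simp only [mem_inter_iff, mem_Icc, mem_Ioi, mem_Ioc]
    constructor
    · rintro ⟨⟨-, hyb⟩, hxy⟩; exact ⟨hxy, hyb⟩
    · rintro ⟨hxy, hyb⟩; exact ⟨⟨hx.1.trans hxy.le, hyb⟩, hxy⟩
  simp_rw [← mem_Ioi, ← indicator_apply]
  rw [setIntegral_indicator measurableSet_Ioi, hset, integral_of_le hx.2]

section ChangeOfVariables

variable {g g' : ℝ → ℝ} {a b : ℝ}

lemma integral_comp_mul_deriv_of_mem_Icc (hg : ∀ x ∈ Icc a b, HasDerivAt g (g' x) x)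
    (hg' : ContinuousOn g' (Icc a b)) {f : ℝ → ℝ} (hf : Continuous f) {u v : ℝ}
    (hu : u ∈ Icc a b) (hv : v ∈ Icc a b) :
    ∫ y in u..v, f (g y) * g' y = ∫ t in g u..g v, f t :=
  integral_comp_mul_deriv (fun y hy => hg y (uIcc_subset_Icc hu hv hy))
    (hg'.mono (uIcc_subset_Icc hu hv)) hf

variable (hg : ∀ x ∈ Icc a b, HasDerivAt g (g' x) x) (hg' : ContinuousOn g' (Icc a b))
include hg hg'

lemma integral_Icc_integral_Icc_ite_lt_deriv_mul_deriv (hab : a ≤ b) :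
    ∫ x in Icc a b, ∫ y in Icc a b, (if y < x then g' x * g' y else 0) = (g b - g a) ^ 2 / 2 := by
  have hinner : ∀ x ∈ Icc a b,
      ∫ y in Icc a b, (if y < x then g' x * g' y else 0) = (g x - g a) * g' x := by
    intro x hx
    have hsub : uIcc a x ⊆ Icc a b := uIcc_subset_Icc (left_mem_Icc.2 hab) hx
    rw [setIntegral_Icc_ite_lt hx, intervalIntegral.integral_const_mul,
      integral_eq_sub_of_hasDerivAt (fun y hy => hg y (hsub hy))
        ((hg'.mono hsub).intervalIntegrable), mul_comm]
  rw [setIntegral_congr_fun measurableSet_Icc hinner, setIntegral_Icc_eq_intervalIntegral hab,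
    integral_comp_mul_deriv_of_mem_Icc hg hg' (f := fun t => t - g a) (by fun_prop)
      (left_mem_Icc.2 hab) (right_mem_Icc.2 hab)]
  simp [integral_comp_sub_right (fun t => t)]

lemma integral_Icc_integral_Icc_ite_gt_deriv_mul_deriv (hab : a ≤ b) :
    ∫ x in Icc a b, ∫ y in Icc a b,
      (if x < y then 2 * (g y - g x) * g' x * g' y else 0) = (g b - g a) ^ 3 / 3 := by
  have hinner : ∀ x ∈ Icc a b, ∫ y in Icc a b,
      (if x < y then 2 * (g y - g x) * g' x * g' y else 0) = (g b - g x) ^ 2 * g' x := by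
    intro x hx
    have hcomm : ∀ y, 2 * (g y - g x) * g' x * g' y = g' x * (2 * (g y - g x) * g' y) :=
      fun y => by ring
    simp_rw [setIntegral_Icc_ite_gt hx, hcomm, intervalIntegral.integral_const_mul]
    rw [integral_comp_mul_deriv_of_mem_Icc hg hg' (f := fun t => 2 * (t - g x)) (by fun_prop)
      hx (right_mem_Icc.2 hab)]
    simp only [intervalIntegral.integral_const_mul, integral_comp_sub_right (fun t => t), sub_self,
      integral_id]
    ring
  rw [setIntegral_congr_fun measurableSet_Icc hinner, setIntegral_Icc_eq_intervalIntegral hab,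
    integral_comp_mul_deriv_of_mem_Icc hg hg' (f := fun t => (g b - t) ^ 2) (by fun_prop)
      (left_mem_Icc.2 hab) (right_mem_Icc.2 hab)]
  norm_num [integral_comp_sub_left (fun t => t ^ 2)]

end ChangeOfVariables

noncomputable def g1deriv (β x : ℝ) : ℝ := √(1 - β) / (2 * β) * (1 - x) ^ (-(3/2) : ℝ)

section

variable {β x y : ℝ}

lemma sqrt_div_one_sub (hβ : β ≤ 1) (hx : x < 1) :
    √((1 - β) / (1 - x)) = √(1 - β) * (1 - x) ^ (-(1/2) : ℝ) := by
  rw [Real.sqrt_div (sub_nonneg.2 hβ), div_eq_mul_inv, Real.sqrt_eq_rpow (1 - x),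
    ← Real.rpow_neg (sub_nonneg.2 hx.le)]

lemma hasDerivAt_g1speed (hβ : β ≤ 1) (hx : x < 1) :
    HasDerivAt (g1speed β) (g1deriv β x) x := by
  have hrpow : HasDerivAt (fun u => (1 - u) ^ (-(1/2) : ℝ)) ((1 - x) ^ (-(3/2) : ℝ) / 2) x := by
    convert ((hasDerivAt_id' x).const_sub 1).rpow_const (p := -(1/2)) (Or.inl (sub_pos.2 hx).ne')
      using 1
    rw [show (-(1/2 : ℝ) - 1) = -(3/2) by norm_num]
    ring
  have hlocal : g1speed β =ᶠ[nhds x] fun u => 1 - 1 / β * (1 - √(1 - β) * (1 - u) ^ (-(1/2) : ℝ)) :=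
    (eventually_lt_nhds hx).mono fun u hu => by
      simp only [g1speed, sqrt_div_one_sub hβ hu]
  refine HasDerivAt.congr_of_eventuallyEq ?_ hlocal
  convert (((hrpow.const_mul (√(1 - β))).const_sub 1).const_mul (1 / β)).const_sub 1 using 1
  rw [g1deriv]
  ring

lemma continuousOn_g1deriv {s : Set ℝ} (hs : ∀ x ∈ s, x < 1) : ContinuousOn (g1deriv β) s :=
  continuousOn_const.mul <| (continuousOn_const.sub continuousOn_id).rpow_const
    fun x hx => Or.inl (sub_pos.2 (hs x hx)).ne'

lemma g1speed_neg_div_one_sub (hβ : β ∈ Ioo (0:ℝ) 1) : g1speed β (-β / (1 - β)) = 0 := by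
  have h1β : 0 < 1 - β := sub_pos.2 hβ.2
  have hquot : (1 - β) / (1 - -β / (1 - β)) = (1 - β) ^ 2 := by
    field_simp; ring
  rw [g1speed, hquot, Real.sqrt_sq h1β.le, sub_sub_cancel, one_div_mul_cancel hβ.1.ne', sub_self]

lemma g1speed_self (hβ : β ≠ 1) : g1speed β β = 1 := by
  simp [g1speed, div_self (sub_ne_zero.2 hβ.symm)]

lemma s1dens_of_lt (hβ : β ≤ 1) (hyx : y < x) : s1dens β x y = g1deriv β x * g1deriv β y := by
  rw [s1dens, if_pos hyx, g1deriv, g1deriv]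
  linear_combination (-((1 - x) ^ (-(3/2) : ℝ) * (1 - y) ^ (-(3/2) : ℝ)) / (4 * β ^ 2)) *
    Real.sq_sqrt (sub_nonneg.2 hβ)

lemma s1dens_of_le (hβ : β ≤ 1) (hxy : x ≤ y) :
    s1dens β x y = 2 * (g1speed β y - g1speed β x) * g1deriv β x * g1deriv β y := by
  rw [s1dens, if_neg (not_lt.2 hxy), g1deriv, g1deriv, g1speed, g1speed]
  linear_combination (-((1 - x) ^ (-(3/2) : ℝ) * (1 - y) ^ (-(3/2) : ℝ) *
    (√((1 - β) / (1 - y)) - √((1 - β) / (1 - x)))) / (2 * β ^ 3)) *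
    Real.sq_sqrt (sub_nonneg.2 hβ)

lemma r1dens_eq_mul_deriv (hx : x ≤ 1) :
    r1dens β x = g1speed β x * (1 - g1speed β x) * g1deriv β x := by
  rw [r1dens, g1deriv, Real.rpow_neg (sub_nonneg.2 hx)]
  ring

end

theorem stmt9 (β : ℝ) (hβ : β ∈ Set.Ioo (0:ℝ) 1) :
    (∫ x in Icc (-β/(1-β)) β, ∫ y in Icc (-β/(1-β)) β,
        (if y < x then s1dens β x y else 0)) = 1/2 ∧
    (∫ x in Icc (-β/(1-β)) β, r1dens β x) = 1/6 ∧
    (∫ x in Icc (-β/(1-β)) β, ∫ y in Icc (-β/(1-β)) β,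
        (if x < y then s1dens β x y else 0)) = 1/3 := by
  have hLβ : -β / (1 - β) ≤ β := by
    have : 0 ≤ β / (1 - β) := div_nonneg hβ.1.le (sub_pos.2 hβ.2).le
    rw [neg_div]; linarith [hβ.1]
  have hlt : ∀ x ∈ Icc (-β / (1 - β)) β, x < 1 := fun x hx => hx.2.trans_lt hβ.2
  have hderiv : ∀ x ∈ Icc (-β / (1 - β)) β, HasDerivAt (g1speed β) (g1deriv β x) x :=
    fun x hx => hasDerivAt_g1speed hβ.2.le (hlt x hx)
  have hcont := continuousOn_g1deriv (β := β) hlt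
  have hlower : ∀ x y, (if y < x then s1dens β x y else 0)
      = if y < x then g1deriv β x * g1deriv β y else 0 :=
    fun x y => ite_congr rfl (s1dens_of_lt hβ.2.le) fun _ => rfl
  have hupper : ∀ x y, (if x < y then s1dens β x y else 0)
      = if x < y then 2 * (g1speed β y - g1speed β x) * g1deriv β x * g1deriv β y else 0 :=
    fun x y => ite_congr rfl (fun h => s1dens_of_le hβ.2.le h.le) fun _ => rfl
  refine ⟨?_, ?_, ?_⟩
  · simp only [hlower]
    rw [integral_Icc_integral_Icc_ite_lt_deriv_mul_deriv hderiv hcont hLβ, g1speed_neg_div_one_sub hβ,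
      g1speed_self hβ.2.ne]
    norm_num
  · rw [setIntegral_congr_fun measurableSet_Icc fun x hx => r1dens_eq_mul_deriv (hlt x hx).le,
      setIntegral_Icc_eq_intervalIntegral hLβ,
      integral_comp_mul_deriv_of_mem_Icc hderiv hcont (f := fun t => t * (1 - t)) (by fun_prop)
        (left_mem_Icc.2 hLβ) (right_mem_Icc.2 hLβ), g1speed_neg_div_one_sub hβ, g1speed_self hβ.2.ne]
    norm_num [mul_one_sub, ← sq, intervalIntegral.integral_sub, integral_pow]
  · simp only [hupper]
    rw [integral_Icc_integral_Icc_ite_gt_deriv_mul_deriv hderiv hcont hLβ, g1speed_neg_div_one_sub hβ,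
      g1speed_self hβ.2.ne]
    norm_num
end

section
/- Let β ∈ (0,1). Define l_1(α) = j_1(α)(cos α - sin α) with j_1(α) = β/((sqrt((1-β)sin α) + sqrt(cos α))²), and l_3(α) = j_3(α)(cos α - sin α) with j_3(α) = 2β(2-β)/(((2-β)sqrt(sin α) + 2sqrt((1-β)cos α))² + β² cos α), for α ∈ [0, π/2]. Let f_1(u) = (1/β)(1 - sqrt((1-β)/(1-u))) and a_3(u) = (1/β)(1 - (2+u)sqrt((1-β)/(4-u²))). Then f_1(l_1(α)) = a_3(l_3(α)) for all α ∈ (0, π/2). -/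
/-!
Write `A = √((1-β)s) + √c` and `B = √s + √((1-β)c)` with `s = sin α`, `c = cos α`. Then
`A² - B² = β (c - s)` and the denominator of `j₃` is `(2 - β)(A² + B²)`, so with `q = B / A`
we get `l₁ = 1 - q²` and `l₃ = 2(1 - q²)/(1 + q²)`. Both sides then reduce to `(1 - √(1-β) / q) / β`.
-/

open Real

noncomputable def interfaceRatio (β s c : ℝ) : ℝ :=
  (√s + √((1 - β) * c)) / (√((1 - β) * s) + √c)

section
variable {β s c : ℝ}

lemma interfaceRatio_pos (hs : 0 < s) (hc : 0 < c) : 0 < interfaceRatio β s c := by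
  have := sqrt_pos.2 hs
  have := sqrt_pos.2 hc
  unfold interfaceRatio
  positivity

lemma sq_sub_sq_eq_mul_sub (hβ : β ≤ 1) (hs : 0 ≤ s) (hc : 0 ≤ c) :
    (√((1 - β) * s) + √c) ^ 2 - (√s + √((1 - β) * c)) ^ 2 = β * (c - s) := by
  have hr := sq_sqrt (sub_nonneg.2 hβ)
  rw [sqrt_mul (sub_nonneg.2 hβ), sqrt_mul (sub_nonneg.2 hβ)]
  linear_combination (√s ^ 2 - √c ^ 2) * hr - β * sq_sqrt hs + β * sq_sqrt hc

lemma sq_add_mul_sq_eq_mul_sq_add_sq (hβ : β ≤ 1) (hc : 0 ≤ c) :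
    ((2 - β) * √s + 2 * √((1 - β) * c)) ^ 2 + β ^ 2 * c
      = (2 - β) * ((√((1 - β) * s) + √c) ^ 2 + (√s + √((1 - β) * c)) ^ 2) := by
  have hr := sq_sqrt (sub_nonneg.2 hβ)
  rw [sqrt_mul (sub_nonneg.2 hβ), sqrt_mul (sub_nonneg.2 hβ)]
  linear_combination ((2 + β) * √c ^ 2 - (2 - β) * √s ^ 2) * hr - β ^ 2 * sq_sqrt hc

lemma div_sq_mul_sub_eq_one_sub_interfaceRatio_sq (hβ : β ≤ 1) (hs : 0 ≤ s) (hc : 0 < c) :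
    β / (√((1 - β) * s) + √c) ^ 2 * (c - s) = 1 - interfaceRatio β s c ^ 2 := by
  have : 0 < √c := sqrt_pos.2 hc
  have hA : 0 < √((1 - β) * s) + √c := by positivity
  have hAB := sq_sub_sq_eq_mul_sub hβ hs hc.le
  rw [interfaceRatio]
  field_simp
  linear_combination -hAB

lemma div_sq_add_sq_mul_sub_eq_interfaceRatio (hβ : β ≤ 1) (hs : 0 ≤ s) (hc : 0 < c) :
    2 * β * (2 - β) / (((2 - β) * √s + 2 * √((1 - β) * c)) ^ 2 + β ^ 2 * c) * (c - s)
      = 2 * (1 - interfaceRatio β s c ^ 2) / (1 + interfaceRatio β s c ^ 2) := by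
  have : 0 < √c := sqrt_pos.2 hc
  have hA : 0 < √((1 - β) * s) + √c := by positivity
  have hAB := sq_sub_sq_eq_mul_sub hβ hs hc.le
  have h2β : 2 - β ≠ 0 := by linarith
  rw [sq_add_mul_sq_eq_mul_sq_add_sq hβ hc.le, interfaceRatio]
  field_simp
  linear_combination -hAB
end

lemma sqrt_div_one_sub_one_sub_sq (k : ℝ) {q : ℝ} (hq : 0 < q) :
    √(k / (1 - (1 - q ^ 2))) = √k / q := by
  rw [sub_sub_cancel, sqrt_div' _ (sq_nonneg q), sqrt_sq hq.le]

lemma two_add_mul_sqrt_div_four_sub_sq (k : ℝ) {q : ℝ} (hq : 0 < q) :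
    (2 + 2 * (1 - q ^ 2) / (1 + q ^ 2)) * √(k / (4 - (2 * (1 - q ^ 2) / (1 + q ^ 2)) ^ 2))
      = √k / q := by
  have h4 : 4 - (2 * (1 - q ^ 2) / (1 + q ^ 2)) ^ 2 = (4 * q / (1 + q ^ 2)) ^ 2 := by
    field_simp; ring
  rw [h4, sqrt_div' _ (sq_nonneg _), sqrt_sq (by positivity)]
  field_simp; ring

theorem stmt16 (β : ℝ) (hβ : β ∈ Set.Ioo (0:ℝ) 1) (α : ℝ)
    (hα : α ∈ Set.Ioo (0:ℝ) (Real.pi/2)) :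
    let j1 : ℝ := β / (Real.sqrt ((1-β) * Real.sin α) + Real.sqrt (Real.cos α))^2
    let j3 : ℝ := 2*β*(2-β) /
      (((2-β) * Real.sqrt (Real.sin α) + 2 * Real.sqrt ((1-β) * Real.cos α))^2
        + β^2 * Real.cos α)
    let l1 : ℝ := j1 * (Real.cos α - Real.sin α)
    let l3 : ℝ := j3 * (Real.cos α - Real.sin α)
    (1/β) * (1 - Real.sqrt ((1-β)/(1-l1)))
      = (1/β) * (1 - (2+l3) * Real.sqrt ((1-β)/(4-l3^2))) := by
  intro j1 j3 l1 l3
  have hs : 0 < sin α := sin_pos_of_pos_of_lt_pi hα.1 (by linarith [hα.2, pi_pos])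
  have hc : 0 < cos α := cos_pos_of_mem_Ioo ⟨by linarith [hα.1, pi_pos], hα.2⟩
  have hl1 : l1 = 1 - interfaceRatio β (sin α) (cos α) ^ 2 :=
    div_sq_mul_sub_eq_one_sub_interfaceRatio_sq hβ.2.le hs.le hc
  have hl3 : l3 = 2 * (1 - interfaceRatio β (sin α) (cos α) ^ 2)
      / (1 + interfaceRatio β (sin α) (cos α) ^ 2) :=
    div_sq_add_sq_mul_sub_eq_interfaceRatio hβ.2.le hs.le hc
  have hq := interfaceRatio_pos (β := β) hs hc
  rw [hl1, hl3, sqrt_div_one_sub_one_sub_sq _ hq, two_add_mul_sqrt_div_four_sub_sq _ hq]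
end

section
/- Let (U_j, ..., U_{j+k+1}) be real numbers with a unique minimum attained at index r, j ≤ r ≤ j+k+1. Define Ũ_{j+k+1} = min{U_j, ..., U_{j+k+1}}, Ũ_i = U_{i+1} for r ≤ i ≤ j+k, and Ũ_j = max{U_j, U_{j+1}}, Ũ_{j+1} = max{min{U_j, U_{j+1}}, U_{j+2}}, ..., Ũ_i = max{min{...min{U_j,U_{j+1}},...}, U_{i+1}} for j ≤ i ≤ r-1 (with all other entries Ũ_i = U_i for i ∉ {j,...,j+k+1}). Define the sorting operators σ_n acting on sequences by σ_n Y = (swap entries n, n+1 of Y) if Y_n < Y_{n+1}, else Y. Then Ũ = σ_{j+k} σ_{j+k-1} ⋯ σ_j U. -/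
/-!
Sweeping `σ_j, σ_{j+1}, …` from left to right carries the running minimum of `U_j, U_{j+1}, …`
along: after the first `m` steps position `j + m` holds `min{U_j, …, U_{j+m}}`, each earlier
position `i` holds `max (min{U_j, …, U_i}) U_{i+1}`, and positions beyond `j + m` are untouched.
Once the sweep has passed the minimiser `r`, the running minimum is `U_r`, which lies below every
later entry, so the `max` at a position `i ≥ r` is just `U_{i+1}`.
-/

/-- TASEP sorting operator: swap entries at positions `n` and `n+1`
if the left one is strictly smaller. -/
noncomputable def sortOp (n : ℤ) (Y : ℤ → ℝ) : ℤ → ℝ := fun i =>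
  if Y n < Y (n+1) then
    (if i = n then Y (n+1) else if i = n+1 then Y n else Y i)
  else Y i

section RunningMin

variable {α : Type*} [ConditionallyCompleteLinearOrder α] (f : ℤ → α)

theorem sInf_image_Icc_self (j : ℤ) : sInf (f '' Set.Icc j j) = f j := by
  rw [Set.Icc_self, Set.image_singleton, csInf_singleton]

theorem sInf_image_Icc_succ {j n : ℤ} (h : j ≤ n) :
    sInf (f '' Set.Icc j (n + 1)) = min (sInf (f '' Set.Icc j n)) (f (n + 1)) := by
  have hIcc : Set.Icc j (n + 1) = insert (n + 1) (Set.Icc j n) := by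
    ext x; simp only [Set.mem_Icc, Set.mem_insert_iff]; omega
  rw [hIcc, Set.image_insert_eq, min_comm,
    csInf_insert ((Set.finite_Icc j n).image f).bddBelow ((Set.nonempty_Icc.mpr h).image f)]

theorem sInf_image_Icc_le {j r i : ℤ} (hjr : j ≤ r) (hri : r ≤ i) :
    sInf (f '' Set.Icc j i) ≤ f r :=
  csInf_le ((Set.finite_Icc j i).image f).bddBelow ⟨r, ⟨hjr, hri⟩, rfl⟩

end RunningMin

theorem sortOp_apply (n : ℤ) (Y : ℤ → ℝ) (i : ℤ) :
    sortOp n Y i = if i = n then max (Y n) (Y (n + 1))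
      else if i = n + 1 then min (Y n) (Y (n + 1)) else Y i := by
  unfold sortOp
  by_cases h : Y n < Y (n + 1)
  · simp only [if_pos h, max_eq_right h.le, min_eq_left h.le]
  · rw [not_lt] at h
    simp only [if_neg h.not_gt, max_eq_left h, min_eq_right h]
    split_ifs <;> subst_vars <;> rfl

noncomputable def sweepState (U : ℤ → ℝ) (j : ℤ) (m : ℕ) : ℤ → ℝ := fun i =>
  if j ≤ i ∧ i < j + m then max (sInf (U '' Set.Icc j i)) (U (i + 1))
  else if i = j + m then sInf (U '' Set.Icc j (j + m))
  else U i

theorem sweepState_zero (U : ℤ → ℝ) (j : ℤ) : sweepState U j 0 = U := by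
  funext i
  simp only [sweepState, Nat.cast_zero, add_zero]
  split_ifs with h₁ h₂
  · omega
  · rw [h₂, sInf_image_Icc_self]
  · rfl

theorem sortOp_sweepState (U : ℤ → ℝ) (j : ℤ) (m : ℕ) :
    sortOp (j + m) (sweepState U j m) = sweepState U j (m + 1) := by
  have hfront : sweepState U j m (j + m) = sInf (U '' Set.Icc j (j + m)) := by
    simp [sweepState]
  have hnext : sweepState U j m (j + m + 1) = U (j + m + 1) := by
    simp only [sweepState]; rw [if_neg (by omega), if_neg (by omega)]
  funext i
  rw [sortOp_apply, hfront, hnext]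
  simp only [sweepState, Nat.cast_add, Nat.cast_one, ← add_assoc]
  split_ifs <;> try first | omega | rfl
  · subst_vars; rfl
  · subst_vars; exact (sInf_image_Icc_succ U (by omega)).symm

theorem foldl_sortOp_eq_sweepState (U : ℤ → ℝ) (j : ℤ) (m : ℕ) :
    (List.range m).foldl (fun Y n => sortOp (j + (n : ℤ)) Y) U = sweepState U j m := by
  -- `n : ℤ` here: `List.range m` is coerced to `List ℤ` through the list monad.
  simp only [List.bind_eq_flatMap, List.pure_def, ← List.map_eq_flatMap, List.foldl_map]
  induction m with
  | zero => simp [sweepState_zero]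
  | succ m ih =>
    rw [List.range_succ, List.foldl_append, ih, List.foldl_cons, List.foldl_nil,
      sortOp_sweepState]

theorem stmt17 (U : ℤ → ℝ) (j r : ℤ) (k : ℕ)
    (hr : r ∈ Set.Icc j (j + (k : ℤ) + 1))
    (hmin : ∀ i ∈ Set.Icc j (j + (k : ℤ) + 1), i ≠ r → U r < U i) :
    (List.range (k + 1)).foldl (fun Y m => sortOp (j + (m : ℤ)) Y) U
      = fun i =>
        if i = j + (k : ℤ) + 1 then sInf (U '' Set.Icc j (j + (k : ℤ) + 1))
        else if r ≤ i ∧ i ≤ j + (k : ℤ) then U (i + 1)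
        else if j ≤ i ∧ i < r then max (sInf (U '' Set.Icc j i)) (U (i + 1))
        else U i := by
  obtain ⟨hjr, hrk⟩ := hr
  rw [foldl_sortOp_eq_sweepState]
  funext i
  simp only [sweepState, Nat.cast_add, Nat.cast_one, ← add_assoc]
  split_ifs <;> try first | rfl | omega
  have hUr : U r < U (i + 1) := hmin (i + 1) ⟨by omega, by omega⟩ (by omega)
  exact max_eq_right ((sInf_image_Icc_le U hjr (by omega)).trans hUr.le)
end
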